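/- arXiv:1403.3885 — 2 statements merged into one kernel-verified Lean document; each statement's English description precedes it below -/
import Mathlib

section
/- For any network (polymatrix) coordination game, every solution p : [0,∞) → Δ of the replicator dynamics whose initial condition p(0) lies in the interior of Δ converges point-wise: there exists a single fixed point q ∈ Δ of the replicator dynamics such that p(t) → q as t → ∞. -/
open Filter Topology Finset

variable {V : Type} [Fintype V] [DecidableEq V] {T : Type} [Fintype T] [DecidableEq T]

/-- Expected utility `u_{iγ}(p)` of player `i` playing strategy `γ` in the network
(polymatrix) coordination game on the graph `G` with edge payoff matrices `A`. -/
def expUtil (G : SimpleGraph V) [DecidableRel G.Adj] (A : V → V → T → T → ℝ)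
    (p : V → T → ℝ) (i : V) (γ : T) : ℝ :=
  ∑ j ∈ G.neighborFinset i, ∑ δ, A i j γ δ * p j δ

/-- Expected utility `û_i(p) = Σ_γ p_{iγ} u_{iγ}(p)` of player `i`. -/
def avgUtil (G : SimpleGraph V) [DecidableRel G.Adj] (A : V → V → T → T → ℝ)
    (p : V → T → ℝ) (i : V) : ℝ :=
  ∑ γ, p i γ * expUtil G A p i γ

/-- Membership in the product of simplices `Δ`. -/
def inSimplex (p : V → T → ℝ) : Prop :=
  ∀ i, (∀ γ, 0 ≤ p i γ) ∧ ∑ γ, p i γ = 1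

/-- `q` is a fixed point of the replicator dynamics: every strategy played with
positive probability has expected utility equal to the player's average utility. -/
def isFixedPt (G : SimpleGraph V) [DecidableRel G.Adj] (A : V → V → T → T → ℝ)
    (q : V → T → ℝ) : Prop :=
  ∀ i γ, 0 < q i γ → expUtil G A q i γ = avgUtil G A q i

/-- `p : ℝ → Δ` is a solution of the replicator dynamics
`dp_{iγ}/dt = p_{iγ}(u_{iγ}(p) - û_i(p))` on `[0,∞)`, staying in `Δ`. -/
def isReplicatorSol (G : SimpleGraph V) [DecidableRel G.Adj] (A : V → V → T → T → ℝ)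
    (p : ℝ → V → T → ℝ) : Prop :=
  (∀ t, 0 ≤ t → inSimplex (p t)) ∧
  ∀ t, 0 ≤ t → ∀ i γ,
    HasDerivAt (fun τ => p τ i γ)
      (p t i γ * (expUtil G A (p t) i γ - avgUtil G A (p t) i)) t

/-!
`Ψ = Σ_i û_i`, twice the potential of the game, increases along the flow at twice the rate of the
total payoff variance `Σ_{i,γ} p_{iγ} (u_{iγ} - û_i)²`. By compactness the trajectory converges to
some `q ∈ Δ` along a sequence of times, and then `Ψ(p t) ≤ Ψ(q)` for all `t`. The symmetry of the
payoffs gives `Σ q (u(x) - û(x)) - Σ x (u(q) - û(q)) = Ψ(q) - Ψ(x)`, so near `q` the decay rate of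
the relative entropy `D(q ‖ p)` is bounded by a multiple `K` of the payoff variance, and
`D(q ‖ p) + K (Ψ(q) - Ψ(p))` is a local Lyapunov function. It is small at the sampled times, hence
stays small and keeps `p` near `q` (`‖p - q‖ ≤ 2 √D`, a Hellinger bound), and tends to `0`.
Finally, were the limit `q` not a fixed point, its payoff variance would be positive and `Ψ` would
grow linearly along the trajectory.
-/

section RealAnalysis

variable {f f' : ℝ → ℝ} {D : Set ℝ}

theorem Convex.monotoneOn_of_hasDerivAt_nonneg (hD : Convex ℝ D)
    (hf : ∀ x ∈ D, HasDerivAt f (f' x) x) (hf' : ∀ x ∈ D, 0 ≤ f' x) : MonotoneOn f D :=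
  monotoneOn_of_hasDerivWithinAt_nonneg hD
    (fun x hx => (hf x hx).continuousAt.continuousWithinAt)
    (fun x hx => (hf x (interior_subset hx)).hasDerivWithinAt) fun x hx => hf' x (interior_subset hx)

theorem Convex.antitoneOn_of_hasDerivAt_nonpos (hD : Convex ℝ D)
    (hf : ∀ x ∈ D, HasDerivAt f (f' x) x) (hf' : ∀ x ∈ D, f' x ≤ 0) : AntitoneOn f D :=
  antitoneOn_of_hasDerivWithinAt_nonpos hD
    (fun x hx => (hf x hx).continuousAt.continuousWithinAt)
    (fun x hx => (hf x (interior_subset hx)).hasDerivWithinAt) fun x hx => hf' x (interior_subset hx)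

theorem ContinuousOn.le_of_eventually_nhdsGT_le {s t : ℝ} (hf : ContinuousOn f (Set.Ici s))
    (hloc : ∀ x, s ≤ x → f x ≤ f s → ∀ᶠ y in 𝓝[>] x, f y ≤ f x) (hst : s ≤ t) :
    f t ≤ f s := by
  have hclosed : IsClosed ({y | f y ≤ f s} ∩ Set.Icc s t) := by
    rw [Set.inter_comm]
    exact (hf.mono Set.Icc_subset_Ici_self).preimage_isClosed_of_isClosed isClosed_Icc isClosed_Iic
  refine hclosed.Icc_subset_of_forall_mem_nhdsWithin (le_refl (f s)) (fun x hx => ?_) ⟨hst, le_rfl⟩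
  exact (hloc x hx.2.1 hx.1).mono fun y hy => hy.trans hx.1

theorem two_mul_sub_le_mul_log_sub_log {a b : ℝ} (ha : 0 ≤ a) (hb : 0 < b) :
    2 * a - 2 * (√a * √b) ≤ a * (Real.log a - Real.log b) := by
  rcases ha.eq_or_lt with rfl | ha
  · simp
  have hsa := Real.sqrt_pos.2 ha
  have hlog : Real.log (√b / √a) ≤ √b / √a - 1 := Real.log_le_sub_one_of_pos (by positivity)
  rw [Real.log_div (Real.sqrt_pos.2 hb).ne' hsa.ne', Real.log_sqrt hb.le,
    Real.log_sqrt ha.le] at hlog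
  have hscale : a * (√b / √a) = √a * √b := by
    rw [mul_div_assoc', div_eq_iff hsa.ne']
    nth_rewrite 1 [← Real.mul_self_sqrt ha.le]
    ring
  nlinarith [mul_le_mul_of_nonneg_left hlog ha.le]

theorem single_le_sum_sum {ι κ : Type*} [Fintype ι] [Fintype κ] {f : ι → κ → ℝ}
    (hf : ∀ i j, 0 ≤ f i j) (i : ι) (j : κ) : f i j ≤ ∑ i, ∑ j, f i j :=
  (Finset.single_le_sum (fun j _ => hf i j) (Finset.mem_univ j)).trans <|
    Finset.single_le_sum (f := fun i => ∑ j, f i j)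
      (fun i _ => Finset.sum_nonneg fun j _ => hf i j) (Finset.mem_univ i)

end RealAnalysis

section Simplex

variable {V T : Type} [Fintype T]

theorem inSimplex.le_one {x : V → T → ℝ} (hx : inSimplex x) (i : V) (γ : T) : x i γ ≤ 1 :=
  (hx i).2 ▸ Finset.single_le_sum (fun δ _ => (hx i).1 δ) (Finset.mem_univ γ)

theorem isCompact_setOf_inSimplex [Finite V] : IsCompact {x : V → T → ℝ | inSimplex x} := by
  have hclosed : IsClosed {x : V → T → ℝ | inSimplex x} := by
    simp only [inSimplex, Set.ofPred_forall, Set.ofPred_and]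
    exact isClosed_iInter fun i => (isClosed_iInter fun γ => isClosed_le continuous_const
      (by fun_prop)).inter (isClosed_eq (by fun_prop) continuous_const)
  exact isCompact_Icc.of_isClosed_subset hclosed fun x hx =>
    ⟨fun i γ => (hx i).1 γ, fun i γ => hx.le_one i γ⟩

end Simplex

section RelEntropy

variable {V T : Type} [Fintype V] [Fintype T]

/-- The relative entropy `D(q ‖ x)`; terms with `q i γ = 0` vanish whatever `x` is,
as with the convention `0 log 0 = 0`. -/
noncomputable def relEntropy (q x : V → T → ℝ) : ℝ :=
  ∑ i, ∑ γ, q i γ * (Real.log (q i γ) - Real.log (x i γ))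

theorem relEntropy_self (q : V → T → ℝ) : relEntropy q q = 0 := by
  simp [relEntropy]

theorem continuousAt_relEntropy {q : V → T → ℝ} (hq : ∀ i γ, 0 ≤ q i γ) :
    ContinuousAt (relEntropy q) q := by
  refine tendsto_finsetSum _ fun i _ => tendsto_finsetSum _ fun γ _ => ?_
  rcases (hq i γ).eq_or_lt with h | h
  · simp only [← h, zero_mul]
    exact tendsto_const_nhds
  · have hcoord : ContinuousAt (fun x : V → T → ℝ => x i γ) q :=
      (continuous_apply_apply i γ).continuousAt
    exact continuousAt_const.mul (continuousAt_const.sub (hcoord.log h.ne'))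

theorem sum_sq_sqrt_sub_sqrt_le_relEntropy {q x : V → T → ℝ} (hq : inSimplex q)
    (hx : inSimplex x) (hxpos : ∀ i γ, 0 < x i γ) :
    ∑ i, ∑ γ, (√(q i γ) - √(x i γ)) ^ 2 ≤ relEntropy q x := by
  have hplayer : ∀ i, ∑ γ, (√(q i γ) - √(x i γ)) ^ 2
      = ∑ γ, (2 * q i γ - 2 * (√(q i γ) * √(x i γ))) := by
    intro i
    have h : ∀ γ, (√(q i γ) - √(x i γ)) ^ 2
        = 2 * q i γ - 2 * (√(q i γ) * √(x i γ)) + (x i γ - q i γ) := by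
      intro γ
      rw [sub_sq, Real.sq_sqrt ((hq i).1 γ), Real.sq_sqrt (hxpos i γ).le]
      ring
    simp only [h, Finset.sum_add_distrib, Finset.sum_sub_distrib (f := x i), (hx i).2, (hq i).2,
      sub_self, add_zero]
  rw [Finset.sum_congr rfl fun i _ => hplayer i]
  exact Finset.sum_le_sum fun i _ => Finset.sum_le_sum fun γ _ =>
    two_mul_sub_le_mul_log_sub_log ((hq i).1 γ) (hxpos i γ)

theorem relEntropy_nonneg {q x : V → T → ℝ} (hq : inSimplex q) (hx : inSimplex x)
    (hxpos : ∀ i γ, 0 < x i γ) : 0 ≤ relEntropy q x :=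
  (Finset.sum_nonneg fun _ _ => Finset.sum_nonneg fun _ _ => sq_nonneg _).trans
    (sum_sq_sqrt_sub_sqrt_le_relEntropy hq hx hxpos)

theorem dist_le_two_mul_sqrt_relEntropy {q x : V → T → ℝ} (hq : inSimplex q) (hx : inSimplex x)
    (hxpos : ∀ i γ, 0 < x i γ) : dist x q ≤ 2 * √(relEntropy q x) := by
  have h2 : 0 ≤ 2 * √(relEntropy q x) := by positivity
  refine (dist_pi_le_iff h2).2 fun i => (dist_pi_le_iff h2).2 fun γ => ?_
  have hq0 := (hq i).1 γ
  have hx0 := (hxpos i γ).le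
  have hfactor : x i γ - q i γ = (√(x i γ) - √(q i γ)) * (√(x i γ) + √(q i γ)) := by
    linear_combination Real.sq_sqrt hq0 - Real.sq_sqrt hx0
  have hdiff : |√(x i γ) - √(q i γ)| ≤ √(relEntropy q x) := by
    rw [abs_sub_comm, ← Real.sqrt_sq_eq_abs]
    exact Real.sqrt_le_sqrt ((single_le_sum_sum (f := fun i γ => (√(q i γ) - √(x i γ)) ^ 2)
      (fun _ _ => sq_nonneg _) i γ).trans
      (sum_sq_sqrt_sub_sqrt_le_relEntropy hq hx hxpos))
  have hsum : √(x i γ) + √(q i γ) ≤ 2 := by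
    linarith [Real.sqrt_le_one.2 (hx.le_one i γ), Real.sqrt_le_one.2 (hq.le_one i γ)]
  calc dist (x i γ) (q i γ) = |√(x i γ) - √(q i γ)| * (√(x i γ) + √(q i γ)) := by
        rw [Real.dist_eq, hfactor, abs_mul,
          abs_of_nonneg (a := √(x i γ) + √(q i γ)) (by positivity)]
    _ ≤ √(relEntropy q x) * 2 := mul_le_mul hdiff hsum (by positivity) (by positivity)
    _ = 2 * √(relEntropy q x) := mul_comm _ _

end RelEntropy

section Game

variable {V T : Type} [Fintype V] [Fintype T] (G : SimpleGraph V) [DecidableRel G.Adj]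
  (A : V → V → T → T → ℝ)

def excessUtil (x : V → T → ℝ) (i : V) (γ : T) : ℝ := expUtil G A x i γ - avgUtil G A x i

/-- Twice the potential of the game: each edge payoff is counted once from each endpoint. -/
def potential (x : V → T → ℝ) : ℝ := ∑ i, avgUtil G A x i

def payoffVariance (x : V → T → ℝ) : ℝ := ∑ i, ∑ γ, x i γ * excessUtil G A x i γ ^ 2

noncomputable def lyapunov (K : ℝ) (q x : V → T → ℝ) : ℝ :=
  relEntropy q x + K * (potential G A q - potential G A x)

@[fun_prop]
theorem continuous_expUtil (i : V) (γ : T) : Continuous fun x => expUtil G A x i γ := by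
  unfold expUtil; fun_prop

@[fun_prop]
theorem continuous_avgUtil (i : V) : Continuous fun x => avgUtil G A x i := by
  unfold avgUtil; fun_prop

@[fun_prop]
theorem continuous_excessUtil (i : V) (γ : T) : Continuous fun x => excessUtil G A x i γ := by
  unfold excessUtil; fun_prop

theorem continuous_potential : Continuous (potential G A) := by
  unfold potential; fun_prop

theorem continuous_payoffVariance : Continuous (payoffVariance G A) := by
  unfold payoffVariance; fun_prop

theorem exists_abs_excessUtil_le (i : V) (γ : T) :
    ∃ C, ∀ x, inSimplex x → |excessUtil G A x i γ| ≤ C := by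
  obtain ⟨C, hC⟩ := isCompact_setOf_inSimplex.exists_bound_of_continuousOn
    (continuous_excessUtil G A i γ).continuousOn
  exact ⟨C, fun x hx => by simpa using hC x hx⟩

theorem sum_mul_expUtil_comm (hsymm : ∀ i j γ δ, A i j γ δ = A j i δ γ) (x y : V → T → ℝ) :
    ∑ i, ∑ γ, x i γ * expUtil G A y i γ = ∑ i, ∑ γ, y i γ * expUtil G A x i γ := by
  have hbilin : ∀ x y : V → T → ℝ, ∑ i, ∑ γ, x i γ * expUtil G A y i γ
      = ∑ i, ∑ j, ∑ γ, ∑ δ, if G.Adj i j then x i γ * A i j γ δ * y j δ else 0 := by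
    intro x y
    refine Finset.sum_congr rfl fun i _ => ?_
    simp only [expUtil, SimpleGraph.neighborFinset_eq_filter, Finset.sum_filter, Finset.mul_sum]
    rw [Finset.sum_comm]
    refine Finset.sum_congr rfl fun j _ => ?_
    split_ifs <;> simp [Finset.mul_sum, mul_assoc]
  rw [hbilin, hbilin, Finset.sum_comm]
  refine Finset.sum_congr rfl fun j _ => Finset.sum_congr rfl fun i _ => ?_
  rw [Finset.sum_comm]
  refine Finset.sum_congr rfl fun δ _ => Finset.sum_congr rfl fun γ _ => ?_
  simp only [G.adj_comm j i, hsymm j i δ γ]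
  split_ifs <;> ring

theorem sum_mul_excessUtil (x y : V → T → ℝ) (i : V) :
    ∑ γ, y i γ * excessUtil G A x i γ
      = ∑ γ, y i γ * expUtil G A x i γ - (∑ γ, y i γ) * avgUtil G A x i := by
  simp only [excessUtil, mul_sub, Finset.sum_sub_distrib, Finset.sum_mul]

theorem sum_mul_excessUtil_self {x : V → T → ℝ} {i : V} (hx : ∑ γ, x i γ = 1) :
    ∑ γ, x i γ * excessUtil G A x i γ = 0 := by
  rw [sum_mul_excessUtil, hx, one_mul]
  exact sub_self _

theorem sum_mul_excessUtil_sub_sum_mul_excessUtil (hsymm : ∀ i j γ δ, A i j γ δ = A j i δ γ)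
    {x y : V → T → ℝ} (hx : inSimplex x) (hy : inSimplex y) :
    ∑ i, ∑ γ, y i γ * excessUtil G A x i γ - ∑ i, ∑ γ, x i γ * excessUtil G A y i γ
      = potential G A y - potential G A x := by
  simp only [sum_mul_excessUtil, (hx _).2, (hy _).2, one_mul, Finset.sum_sub_distrib, potential]
  rw [sum_mul_expUtil_comm G A hsymm y x]
  ring

theorem sum_mul_excessUtil_mul_expUtil {x : V → T → ℝ} (hx : ∀ i, ∑ γ, x i γ = 1) :
    ∑ i, ∑ γ, x i γ * excessUtil G A x i γ * expUtil G A x i γ = payoffVariance G A x := by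
  refine Finset.sum_congr rfl fun i _ => ?_
  calc ∑ γ, x i γ * excessUtil G A x i γ * expUtil G A x i γ
      = ∑ γ, (x i γ * excessUtil G A x i γ ^ 2
          + x i γ * excessUtil G A x i γ * avgUtil G A x i) :=
        Finset.sum_congr rfl fun γ _ => by unfold excessUtil; ring
    _ = ∑ γ, x i γ * excessUtil G A x i γ ^ 2 := by
        rw [Finset.sum_add_distrib, ← Finset.sum_mul, sum_mul_excessUtil_self G A (hx i),
          zero_mul, add_zero]

theorem hasDerivAt_potential_comp (hsymm : ∀ i j γ δ, A i j γ δ = A j i δ γ)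
    {p : ℝ → V → T → ℝ} {v : V → T → ℝ} {t : ℝ}
    (hp : ∀ i γ, HasDerivAt (fun τ => p τ i γ) (v i γ) t) :
    HasDerivAt (fun τ => potential G A (p τ))
      (2 * ∑ i, ∑ γ, v i γ * expUtil G A (p t) i γ) t := by
  have h : HasDerivAt (fun τ => potential G A (p τ))
      (∑ i, ∑ γ, (v i γ * expUtil G A (p t) i γ + p t i γ * expUtil G A v i γ)) t :=
    HasDerivAt.fun_sum fun i _ => HasDerivAt.fun_sum fun γ _ => (hp i γ).mul <|
      HasDerivAt.fun_sum fun j _ => HasDerivAt.fun_sum fun δ _ => (hp j δ).const_mul (A i j γ δ)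
  simp only [Finset.sum_add_distrib, sum_mul_expUtil_comm G A hsymm (p t) v] at h
  rwa [← two_mul] at h

theorem payoffVariance_nonneg {x : V → T → ℝ} (hx : ∀ i γ, 0 ≤ x i γ) :
    0 ≤ payoffVariance G A x :=
  Finset.sum_nonneg fun i _ => Finset.sum_nonneg fun γ _ => mul_nonneg (hx i γ) (sq_nonneg _)

theorem payoffVariance_pos_of_not_isFixedPt {q : V → T → ℝ} (hq : ∀ i γ, 0 ≤ q i γ)
    (hfix : ¬ isFixedPt G A q) : 0 < payoffVariance G A q := by
  simp only [isFixedPt, not_forall] at hfix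
  obtain ⟨i, γ, hpos, hne⟩ := hfix
  refine Finset.sum_pos' (fun i _ => Finset.sum_nonneg fun γ _ =>
    mul_nonneg (hq i γ) (sq_nonneg _)) ⟨i, Finset.mem_univ i, ?_⟩
  exact Finset.sum_pos' (fun γ _ => mul_nonneg (hq i γ) (sq_nonneg _))
    ⟨γ, Finset.mem_univ γ, mul_pos hpos (sq_pos_of_ne_zero (sub_ne_zero.2 hne))⟩

theorem exists_eventually_neg_excessUtil_le_mul_sq (q : V → T → ℝ) :
    ∃ K, 0 ≤ K ∧ ∀ᶠ x in 𝓝 q, ∀ i γ, -excessUtil G A q i γ ≤ K * excessUtil G A x i γ ^ 2 := by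
  set K := ∑ i, ∑ γ, 2 / |excessUtil G A q i γ|
  have hK : 0 ≤ K := by positivity
  refine ⟨K, hK, eventually_all.2 fun i => eventually_all.2 fun γ => ?_⟩
  rcases le_or_gt 0 (excessUtil G A q i γ) with hc | hc
  · exact Eventually.of_forall fun x => by
      nlinarith [mul_nonneg hK (sq_nonneg (excessUtil G A x i γ))]
  · have hKc : 2 / |excessUtil G A q i γ| ≤ K :=
      single_le_sum_sum (f := fun i γ => 2 / |excessUtil G A q i γ|) (fun _ _ => by positivity) i γ
    have hat : -excessUtil G A q i γ < K * excessUtil G A q i γ ^ 2 := by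
      have habs : 0 < |excessUtil G A q i γ| := abs_pos.2 hc.ne
      calc -excessUtil G A q i γ < 2 / |excessUtil G A q i γ| * excessUtil G A q i γ ^ 2 := by
            rw [← sq_abs, abs_of_neg hc]; field_simp; linarith
        _ ≤ K * excessUtil G A q i γ ^ 2 := by gcongr
    have hcont : ContinuousAt (fun x => K * excessUtil G A x i γ ^ 2) q := by fun_prop
    exact (continuousAt_const.eventually_lt hcont hat).mono fun x hx => hx.le

theorem neg_sum_mul_excessUtil_le (hsymm : ∀ i j γ δ, A i j γ δ = A j i δ γ)
    {q x : V → T → ℝ} (hq : inSimplex q) (hx : inSimplex x)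
    (hpot : potential G A x ≤ potential G A q) {K : ℝ}
    (hK : ∀ i γ, -excessUtil G A q i γ ≤ K * excessUtil G A x i γ ^ 2) :
    -∑ i, ∑ γ, q i γ * excessUtil G A x i γ ≤ K * payoffVariance G A x := by
  have hid := sum_mul_excessUtil_sub_sum_mul_excessUtil G A hsymm hx hq
  have hterm : -∑ i, ∑ γ, x i γ * excessUtil G A q i γ ≤ K * payoffVariance G A x := by
    rw [payoffVariance, Finset.mul_sum, ← Finset.sum_neg_distrib]
    refine Finset.sum_le_sum fun i _ => ?_
    rw [Finset.mul_sum, ← Finset.sum_neg_distrib]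
    refine Finset.sum_le_sum fun γ _ => ?_
    nlinarith [mul_le_mul_of_nonneg_left (hK i γ) ((hx i).1 γ)]
  linarith

end Game

section Trajectory

variable {V T : Type} [Fintype V] [Fintype T] {G : SimpleGraph V} [DecidableRel G.Adj]
  {A : V → V → T → T → ℝ} {p : ℝ → V → T → ℝ} {t : ℝ}

theorem isReplicatorSol.simplex (hsol : isReplicatorSol G A p) (ht : 0 ≤ t) : inSimplex (p t) :=
  hsol.1 t ht

theorem isReplicatorSol.hasDerivAt (hsol : isReplicatorSol G A p) (ht : 0 ≤ t) (i : V) (γ : T) :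
    HasDerivAt (fun τ => p τ i γ) (p t i γ * excessUtil G A (p t) i γ) t :=
  hsol.2 t ht i γ

theorem isReplicatorSol.continuousAt (hsol : isReplicatorSol G A p) (ht : 0 ≤ t) :
    ContinuousAt p t :=
  continuousAt_pi.2 fun i => continuousAt_pi.2 fun γ => (hsol.hasDerivAt ht i γ).continuousAt

theorem isReplicatorSol.pos (hsol : isReplicatorSol G A p) (hinit : ∀ i γ, 0 < p 0 i γ)
    (ht : 0 ≤ t) (i : V) (γ : T) : 0 < p t i γ := by
  obtain ⟨C, hC⟩ := exists_abs_excessUtil_le G A i γ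
  -- `p' = p * excessUtil ≥ -C p`, so `p e^{Cτ}` is nondecreasing
  have hmono : MonotoneOn (fun τ => p τ i γ * Real.exp (τ * C)) (Set.Ici 0) := by
    refine (convex_Ici 0).monotoneOn_of_hasDerivAt_nonneg (fun τ hτ =>
      (hsol.hasDerivAt hτ i γ).mul (hasDerivAt_mul_const C).exp) fun τ hτ => ?_
    have hg := neg_le_of_abs_le (hC _ (hsol.simplex hτ))
    have hnonneg := mul_nonneg (mul_nonneg ((hsol.simplex hτ i).1 γ) (Real.exp_pos (τ * C)).le)
      (neg_le_iff_add_nonneg.1 hg)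
    linarith
  have h := hmono (Set.mem_Ici.2 le_rfl) ht ht
  simp only [zero_mul, Real.exp_zero, mul_one] at h
  exact (mul_pos_iff_of_pos_right (Real.exp_pos _)).1 ((hinit i γ).trans_le h)

theorem isReplicatorSol.hasDerivAt_potential (hsymm : ∀ i j γ δ, A i j γ δ = A j i δ γ)
    (hsol : isReplicatorSol G A p) (ht : 0 ≤ t) :
    HasDerivAt (fun τ => potential G A (p τ)) (2 * payoffVariance G A (p t)) t := by
  have h := hasDerivAt_potential_comp G A hsymm (hsol.hasDerivAt ht)
  rwa [sum_mul_excessUtil_mul_expUtil G A fun i => (hsol.simplex ht i).2] at h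

theorem isReplicatorSol.monotoneOn_potential (hsymm : ∀ i j γ δ, A i j γ δ = A j i δ γ)
    (hsol : isReplicatorSol G A p) : MonotoneOn (fun t => potential G A (p t)) (Set.Ici 0) :=
  (convex_Ici 0).monotoneOn_of_hasDerivAt_nonneg (fun _ ht => hsol.hasDerivAt_potential hsymm ht)
    fun _ ht => mul_nonneg zero_le_two
      (payoffVariance_nonneg G A fun i γ => (hsol.simplex ht i).1 γ)

theorem isReplicatorSol.potential_le_of_tendsto (hsymm : ∀ i j γ δ, A i j γ δ = A j i δ γ)
    (hsol : isReplicatorSol G A p) {q : V → T → ℝ} {tk : ℕ → ℝ}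
    (htk : Tendsto tk atTop atTop) (hlim : Tendsto (fun k => p (tk k)) atTop (𝓝 q))
    (ht : 0 ≤ t) : potential G A (p t) ≤ potential G A q :=
  ge_of_tendsto (((continuous_potential G A).tendsto q).comp hlim) <|
    (htk.eventually_ge_atTop t).mono fun _ hk =>
      hsol.monotoneOn_potential hsymm ht (ht.trans hk) hk

theorem isReplicatorSol.hasDerivAt_relEntropy (hsol : isReplicatorSol G A p)
    (hpos : ∀ t, 0 ≤ t → ∀ i γ, 0 < p t i γ) (q : V → T → ℝ) (ht : 0 ≤ t) :
    HasDerivAt (fun τ => relEntropy q (p τ)) (-∑ i, ∑ γ, q i γ * excessUtil G A (p t) i γ) t := by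
  have h : HasDerivAt (fun τ => relEntropy q (p τ))
      (∑ i, ∑ γ, q i γ * -(p t i γ * excessUtil G A (p t) i γ / p t i γ)) t :=
    HasDerivAt.fun_sum fun i _ => HasDerivAt.fun_sum fun γ _ =>
      (((hsol.hasDerivAt ht i γ).log (hpos t ht i γ).ne').const_sub _).const_mul _
  simp only [mul_div_cancel_left₀ _ (hpos t ht _ _).ne', mul_neg, Finset.sum_neg_distrib] at h
  exact h

theorem isReplicatorSol.hasDerivAt_lyapunov (hsymm : ∀ i j γ δ, A i j γ δ = A j i δ γ)
    (hsol : isReplicatorSol G A p) (hpos : ∀ t, 0 ≤ t → ∀ i γ, 0 < p t i γ) (K : ℝ)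
    (q : V → T → ℝ) (ht : 0 ≤ t) :
    HasDerivAt (fun τ => lyapunov G A K q (p τ))
      (-∑ i, ∑ γ, q i γ * excessUtil G A (p t) i γ + K * -(2 * payoffVariance G A (p t))) t :=
  (hsol.hasDerivAt_relEntropy hpos q ht).add
    (((hsol.hasDerivAt_potential hsymm ht).const_sub _).const_mul K)

/-- Once the Lyapunov function is below `(δ / 2) ^ 2`, the trajectory is confined to the ball
of radius `δ` around `q`, where the Lyapunov function does not increase. -/
theorem isReplicatorSol.lyapunov_le_of_lt (hsymm : ∀ i j γ δ, A i j γ δ = A j i δ γ)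
    (hsol : isReplicatorSol G A p) (hpos : ∀ t, 0 ≤ t → ∀ i γ, 0 < p t i γ)
    {q : V → T → ℝ} (hq : inSimplex q) (hpot : ∀ t, 0 ≤ t → potential G A (p t) ≤ potential G A q)
    {K δ : ℝ} (hK : 0 ≤ K) (hδ : 0 < δ)
    (hball : ∀ x ∈ Metric.ball q δ, ∀ i γ, -excessUtil G A q i γ ≤ K * excessUtil G A x i γ ^ 2)
    {s : ℝ} (hs : 0 ≤ s) (hsmall : lyapunov G A K q (p s) < (δ / 2) ^ 2) (hst : s ≤ t) :
    lyapunov G A K q (p t) ≤ lyapunov G A K q (p s) := by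
  have hderiv := fun τ (hτ : 0 ≤ τ) => hsol.hasDerivAt_lyapunov hsymm hpos K q hτ
  refine ContinuousOn.le_of_eventually_nhdsGT_le
    (fun τ hτ => (hderiv τ (hs.trans hτ)).continuousAt.continuousWithinAt)
    (fun x hx hFx => ?_) hst
  have hx0 := hs.trans hx
  have hnear : p x ∈ Metric.ball q δ := by
    have hD : relEntropy q (p x) < (δ / 2) ^ 2 :=
      lt_of_le_of_lt (le_add_of_nonneg_right (mul_nonneg hK (sub_nonneg.2 (hpot x hx0))))
        (hFx.trans_lt hsmall)
    have hsqrt : √(relEntropy q (p x)) < δ / 2 := (Real.sqrt_lt' (by positivity)).2 hD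
    have := dist_le_two_mul_sqrt_relEntropy hq (hsol.simplex hx0) (hpos x hx0)
    rw [Metric.mem_ball]
    linarith
  obtain ⟨ε, hε, hεball⟩ := Metric.eventually_nhds_iff.1
    ((hsol.continuousAt hx0).eventually (Metric.isOpen_ball.mem_nhds hnear))
  filter_upwards [Ioo_mem_nhdsGT (show x < x + ε by linarith)] with y hy
  refine (convex_Icc x y).antitoneOn_of_hasDerivAt_nonpos (fun τ hτ => hderiv τ (hx0.trans hτ.1))
    (fun τ hτ => ?_) ⟨le_rfl, hy.1.le⟩ ⟨hy.1.le, le_rfl⟩ hy.1.le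
  have hτ0 := hx0.trans hτ.1
  have hτball : p τ ∈ Metric.ball q δ := hεball (by
    rw [Real.dist_eq, abs_lt]; constructor <;> linarith [hτ.1, hτ.2, hy.2])
  have hdecay := neg_sum_mul_excessUtil_le G A hsymm hq (hsol.simplex hτ0) (hpot τ hτ0)
    (hball _ hτball)
  have hW := payoffVariance_nonneg G A fun i γ => (hsol.simplex hτ0 i).1 γ
  nlinarith [mul_nonneg hK hW]

theorem isReplicatorSol.tendsto_of_tendsto_comp (hsymm : ∀ i j γ δ, A i j γ δ = A j i δ γ)
    (hsol : isReplicatorSol G A p) (hpos : ∀ t, 0 ≤ t → ∀ i γ, 0 < p t i γ)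
    {q : V → T → ℝ} (hq : inSimplex q) {tk : ℕ → ℝ} (htk : Tendsto tk atTop atTop)
    (hlim : Tendsto (fun k => p (tk k)) atTop (𝓝 q)) : Tendsto p atTop (𝓝 q) := by
  have hpot := fun t (ht : 0 ≤ t) => hsol.potential_le_of_tendsto hsymm htk hlim ht
  obtain ⟨K, hK, hKev⟩ := exists_eventually_neg_excessUtil_le_mul_sq G A q
  obtain ⟨δ, hδ, hball⟩ := Metric.eventually_nhds_iff.1 hKev
  set F := fun t => lyapunov G A K q (p t)
  have hDF : ∀ t, 0 ≤ t → relEntropy q (p t) ≤ F t := fun t ht =>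
    le_add_of_nonneg_right (mul_nonneg hK (sub_nonneg.2 (hpot t ht)))
  have hF0 : ∀ t, 0 ≤ t → 0 ≤ F t := fun t ht =>
    (relEntropy_nonneg hq (hsol.simplex ht) (hpos t ht)).trans (hDF t ht)
  have hFsub : Tendsto (fun k => F (tk k)) atTop (𝓝 0) := by
    have h := (((continuousAt_relEntropy fun i γ => (hq i).1 γ).tendsto).comp hlim).add
      (((((continuous_potential G A).tendsto q).comp hlim).const_sub (potential G A q)).const_mul K)
    simpa [F, lyapunov, relEntropy_self] using h
  have hF : Tendsto F atTop (𝓝 0) := by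
    refine tendsto_order.2 ⟨fun a ha => eventually_atTop.2 ⟨0, fun t ht => ha.trans_le (hF0 t ht)⟩,
      fun ε hε => ?_⟩
    obtain ⟨k, hk, hk0⟩ := ((hFsub.eventually (gt_mem_nhds (lt_min hε (by positivity :
      (0 : ℝ) < (δ / 2) ^ 2)))).and (htk.eventually_ge_atTop 0)).exists
    exact eventually_atTop.2 ⟨tk k, fun t ht => (hsol.lyapunov_le_of_lt hsymm hpos hq hpot hK hδ
      hball hk0 (hk.trans_le (min_le_right _ _)) ht).trans_lt (hk.trans_le (min_le_left _ _))⟩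
  rw [tendsto_iff_dist_tendsto_zero]
  refine squeeze_zero' (Eventually.of_forall fun t => dist_nonneg)
    ((eventually_ge_atTop 0).mono fun t ht =>
      (dist_le_two_mul_sqrt_relEntropy hq (hsol.simplex ht) (hpos t ht)).trans
        (mul_le_mul_of_nonneg_left (Real.sqrt_le_sqrt (hDF t ht)) zero_le_two)) ?_
  simpa using hF.sqrt.const_mul 2

theorem isReplicatorSol.isFixedPt_of_tendsto (hsymm : ∀ i j γ δ, A i j γ δ = A j i δ γ)
    (hsol : isReplicatorSol G A p) {q : V → T → ℝ} (hq : inSimplex q)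
    (hlim : Tendsto p atTop (𝓝 q)) : isFixedPt G A q := by
  by_contra hfix
  have hW := payoffVariance_pos_of_not_isFixedPt G A (fun i γ => (hq i).1 γ) hfix
  obtain ⟨T₀, hT₀⟩ : ∃ T₀, ∀ t, T₀ ≤ t →
      payoffVariance G A q / 2 < payoffVariance G A (p t) ∧ 0 ≤ t :=
    ((((continuous_payoffVariance G A).tendsto q).comp hlim).eventually
      (lt_mem_nhds (half_lt_self hW)) |>.and (eventually_ge_atTop 0)).exists_forall_of_atTop
  -- the potential would then grow at least linearly, yet it converges
  have hmono : MonotoneOn (fun t => potential G A (p t) - payoffVariance G A q * t) (Set.Ici T₀) :=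
    (convex_Ici T₀).monotoneOn_of_hasDerivAt_nonneg
      (fun t ht => (hsol.hasDerivAt_potential hsymm (hT₀ t ht).2).sub
        ((hasDerivAt_id t).const_mul (payoffVariance G A q)))
      fun t ht => by linarith [(hT₀ t ht).1]
  have hgrow : Tendsto (fun t => potential G A (p t)) atTop atTop := by
    refine tendsto_atTop_mono' _ ((eventually_ge_atTop T₀).mono fun t ht => ?_)
      (tendsto_atTop_add_const_left _ (potential G A (p T₀) - payoffVariance G A q * T₀)
        (tendsto_id.const_mul_atTop hW))
    have := hmono (Set.mem_Ici.2 le_rfl) ht ht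
    simp only [id]
    linarith
  exact not_tendsto_atTop_of_tendsto_nhds (((continuous_potential G A).tendsto q).comp hlim) hgrow

end Trajectory

/-- **Point-wise convergence of replicator dynamics in network coordination
games.** Every solution of the replicator dynamics of a network (polymatrix)
coordination game whose initial condition lies in the interior of `Δ` converges,
as `t → ∞`, to a single fixed point `q ∈ Δ` of the replicator dynamics. -/
theorem replicator_pointwise_convergence_network_coordination
    (G : SimpleGraph V) [DecidableRel G.Adj]
    (A : V → V → T → T → ℝ)
    (hsymm : ∀ i j γ δ, A i j γ δ = A j i δ γ)
    (p : ℝ → V → T → ℝ)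
    (hsol : isReplicatorSol G A p)
    (hinit : ∀ i γ, 0 < p 0 i γ) :
    ∃ q : V → T → ℝ, inSimplex q ∧ isFixedPt G A q ∧
      Tendsto p atTop (𝓝 q) := by
  have hpos : ∀ t, 0 ≤ t → ∀ i γ, 0 < p t i γ := fun t ht => hsol.pos hinit ht
  obtain ⟨q, hq, φ, hφ, hlim⟩ :=
    isCompact_setOf_inSimplex.tendsto_subseq fun n : ℕ => hsol.simplex n.cast_nonneg
  have hconv : Tendsto p atTop (𝓝 q) := hsol.tendsto_of_tendsto_comp hsymm hpos hq
    (tendsto_natCast_atTop_atTop.comp hφ.tendsto_atTop) hlim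
  exact ⟨q, hq, hsol.isFixedPt_of_tendsto hsymm hq hconv, hconv⟩
end

section
/- Let a network coordination game be played on a bipartite graph with parts V_left and V_right (every edge joins V_left to V_right), and suppose it has a fully mixed Nash equilibrium q (q_{iγ} > 0 for all i, γ, and u_{iγ}(q) = û_i(q) for all i, γ). Then along every replicator solution p(t) that remains in the interior of Δ, the quantity Σ_{i∈V_left} Σ_{γ} q_{iγ} ln p_{iγ}(t) − Σ_{i∈V_right} Σ_{γ} q_{iγ} ln p_{iγ}(t) is constant in t; equivalently, the difference between the sum over V_left and the sum over V_right of the cross entropies H(q_i, p_i(t)) (and hence of the Kullback–Leibler divergences KL(q_i ‖ p_i(t))) is invariant along trajectories. -/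
open Filter Topology Finset

variable {V : Type} [Fintype V] [DecidableEq V] {T : Type} [Fintype T] [DecidableEq T]

/-!
Along the replicator flow, `d/dt Σ_γ q_{iγ} ln p_{iγ} = Σ_γ q_{iγ} u_{iγ}(p) - û_i(p)`.
Every edge joins `L` to `Lᶜ` and `A_{ij} = A_{ji}ᵀ`, so the pairing `Σ_{i∈L} Σ_γ y_{iγ} u_{iγ}(x)`
equals `Σ_{j∈Lᶜ} Σ_δ x_{jδ} u_{jδ}(y)`. As `q` is a fully mixed equilibrium, `u_j(q)` is constant in
the strategy, so the pairing of `q` with `p` on the `L` side is `Σ_{j∈Lᶜ} û_j(q)`, and symmetrically.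
Together with `Σ_{i∈L} û_i = Σ_{i∈Lᶜ} û_i` at every profile (each edge is counted once on each
side), the `L` and `Lᶜ` parts of the derivative coincide.
-/

section Player

omit [DecidableEq V] [DecidableEq T]

variable {G : SimpleGraph V} [DecidableRel G.Adj] {A : V → V → T → T → ℝ}

theorem sum_mul_expUtil_of_nash {q : V → T → ℝ}
    (hqNash : ∀ i γ, expUtil G A q i γ = avgUtil G A q i) {x : V → T → ℝ} {i : V}
    (hx : ∑ γ, x i γ = 1) :
    ∑ γ, x i γ * expUtil G A q i γ = avgUtil G A q i := by
  simp only [hqNash, ← sum_mul, hx, one_mul]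

theorem sum_mul_expUtil_sub_avgUtil {q x : V → T → ℝ} {i : V} (hq : ∑ γ, q i γ = 1) :
    ∑ γ, q i γ * (expUtil G A x i γ - avgUtil G A x i)
      = ∑ γ, q i γ * expUtil G A x i γ - avgUtil G A x i := by
  simp only [mul_sub, sum_sub_distrib, ← sum_mul, hq, one_mul]

theorem hasDerivAt_sum_mul_log_of_replicator (q : V → T → ℝ) {p : ℝ → V → T → ℝ} {t : ℝ}
    (hpt : ∀ i γ, p t i γ ≠ 0)
    (hode : ∀ i γ, HasDerivAt (fun τ => p τ i γ)
      (p t i γ * (expUtil G A (p t) i γ - avgUtil G A (p t) i)) t) (M : Finset V) :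
    HasDerivAt (fun τ => ∑ i ∈ M, ∑ γ, q i γ * Real.log (p τ i γ))
      (∑ i ∈ M, ∑ γ, q i γ * (expUtil G A (p t) i γ - avgUtil G A (p t) i)) t := by
  refine HasDerivAt.fun_sum fun i _ => HasDerivAt.fun_sum fun γ _ => ?_
  have hlog := (hode i γ).log (hpt i γ)
  rw [mul_div_cancel_left₀ _ (hpt i γ)] at hlog
  exact hlog.const_mul _

end Player

section Bipartite

omit [DecidableEq T]

variable {G : SimpleGraph V} {L : Finset V}

theorem bipartite_compl (hbip : ∀ i j, G.Adj i j → (i ∈ L ↔ j ∉ L)) :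
    ∀ i j, G.Adj i j → (i ∈ Lᶜ ↔ j ∉ Lᶜ) := fun i j hij => by
  simpa only [mem_compl, not_not] using not_congr (hbip i j hij)

variable [DecidableRel G.Adj]

theorem sum_sum_neighborFinset_eq_of_bipartite (hbip : ∀ i j, G.Adj i j → (i ∈ L ↔ j ∉ L))
    (F : V → V → ℝ) :
    ∑ i ∈ L, ∑ j ∈ G.neighborFinset i, F i j = ∑ j ∈ Lᶜ, ∑ i ∈ G.neighborFinset j, F i j :=
  sum_comm' fun i j => by
    simp only [SimpleGraph.mem_neighborFinset, mem_compl]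
    constructor
    · rintro ⟨hi, hij⟩
      exact ⟨hij.symm, (hbip i j hij).1 hi⟩
    · rintro ⟨hji, hj⟩
      exact ⟨(hbip i j hji.symm).2 hj, hji.symm⟩

variable {A : V → V → T → T → ℝ}

theorem sum_mul_expUtil_eq_of_bipartite (hsymm : ∀ i j γ δ, A i j γ δ = A j i δ γ)
    (hbip : ∀ i j, G.Adj i j → (i ∈ L ↔ j ∉ L)) (x y : V → T → ℝ) :
    ∑ i ∈ L, ∑ γ, y i γ * expUtil G A x i γ = ∑ j ∈ Lᶜ, ∑ δ, x j δ * expUtil G A y j δ :=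
  calc ∑ i ∈ L, ∑ γ, y i γ * expUtil G A x i γ
      = ∑ i ∈ L, ∑ j ∈ G.neighborFinset i, ∑ γ, ∑ δ, y i γ * A i j γ δ * x j δ := by
        simp only [expUtil, mul_sum, mul_assoc]
        exact sum_congr rfl fun i _ => sum_comm
    _ = ∑ j ∈ Lᶜ, ∑ i ∈ G.neighborFinset j, ∑ γ, ∑ δ, y i γ * A i j γ δ * x j δ :=
        sum_sum_neighborFinset_eq_of_bipartite hbip _
    _ = ∑ j ∈ Lᶜ, ∑ δ, x j δ * expUtil G A y j δ := by
        simp only [expUtil, mul_sum, hsymm _ _ _ _]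
        refine sum_congr rfl fun j _ => ?_
        conv_rhs => rw [sum_comm]
        refine sum_congr rfl fun i _ => ?_
        rw [sum_comm]
        exact sum_congr rfl fun δ _ => sum_congr rfl fun γ _ => by ring

theorem sum_avgUtil_eq_of_bipartite (hsymm : ∀ i j γ δ, A i j γ δ = A j i δ γ)
    (hbip : ∀ i j, G.Adj i j → (i ∈ L ↔ j ∉ L)) (x : V → T → ℝ) :
    ∑ i ∈ L, avgUtil G A x i = ∑ i ∈ Lᶜ, avgUtil G A x i :=
  sum_mul_expUtil_eq_of_bipartite hsymm hbip x x

theorem sum_drift_eq_of_bipartite (hsymm : ∀ i j γ δ, A i j γ δ = A j i δ γ)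
    (hbip : ∀ i j, G.Adj i j → (i ∈ L ↔ j ∉ L)) {q x : V → T → ℝ} (hq : ∀ i, ∑ γ, q i γ = 1)
    (hqNash : ∀ i γ, expUtil G A q i γ = avgUtil G A q i) (hx : ∀ i, ∑ γ, x i γ = 1) :
    ∑ i ∈ L, ∑ γ, q i γ * (expUtil G A x i γ - avgUtil G A x i)
      = ∑ i ∈ Lᶜ, ∑ γ, q i γ * (expUtil G A x i γ - avgUtil G A x i) := by
  have hL : ∑ i ∈ L, ∑ γ, q i γ * expUtil G A x i γ = ∑ i ∈ Lᶜ, avgUtil G A q i := by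
    rw [sum_mul_expUtil_eq_of_bipartite hsymm hbip x q]
    exact sum_congr rfl fun i _ => sum_mul_expUtil_of_nash hqNash (hx i)
  have hLc : ∑ i ∈ Lᶜ, ∑ γ, q i γ * expUtil G A x i γ = ∑ i ∈ L, avgUtil G A q i := by
    rw [sum_mul_expUtil_eq_of_bipartite hsymm (bipartite_compl hbip) x q, compl_compl]
    exact sum_congr rfl fun i _ => sum_mul_expUtil_of_nash hqNash (hx i)
  simp only [sum_mul_expUtil_sub_avgUtil (hq _), sum_sub_distrib, hL, hLc,
    sum_avgUtil_eq_of_bipartite hsymm hbip]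

end Bipartite

/-- **K-L / cross entropy invariant for bipartite network coordination games.**
Suppose the network coordination game is played on a bipartite graph, with parts
`L` and `Lᶜ`, and has a fully mixed Nash equilibrium `q`. Then along every
replicator solution staying in the interior of `Δ`, the difference between the
left and right parts of `Σ_i Σ_γ q_{iγ} ln p_{iγ}(t)` is constant in `t`;
equivalently the corresponding differences of cross entropies `H(q_i, p_i(t))`
and of Kullback-Leibler divergences `KL(q_i ‖ p_i(t))` are invariant. -/
theorem bipartite_KL_invariant
    (G : SimpleGraph V) [DecidableRel G.Adj]
    (A : V → V → T → T → ℝ)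
    (hsymm : ∀ i j γ δ, A i j γ δ = A j i δ γ)
    (L : Finset V) (hbip : ∀ i j, G.Adj i j → (i ∈ L ↔ j ∉ L))
    (q : V → T → ℝ) (hqΔ : inSimplex q) (hqpos : ∀ i γ, 0 < q i γ)
    (hqNash : ∀ i γ, expUtil G A q i γ = avgUtil G A q i)
    (p : ℝ → V → T → ℝ)
    (hpΔ : ∀ t, inSimplex (p t)) (hppos : ∀ t i γ, 0 < p t i γ)
    (hode : ∀ t i γ, HasDerivAt (fun τ => p τ i γ)
      (p t i γ * (expUtil G A (p t) i γ - avgUtil G A (p t) i)) t) :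
    (∀ t₁ t₂ : ℝ,
      ((∑ i ∈ L, ∑ γ, q i γ * Real.log (p t₁ i γ))
          - ∑ i ∈ Lᶜ, ∑ γ, q i γ * Real.log (p t₁ i γ)) =
      ((∑ i ∈ L, ∑ γ, q i γ * Real.log (p t₂ i γ))
          - ∑ i ∈ Lᶜ, ∑ γ, q i γ * Real.log (p t₂ i γ))) ∧
    (∀ t₁ t₂ : ℝ,
      ((∑ i ∈ L, -∑ γ, q i γ * Real.log (p t₁ i γ))
          - ∑ i ∈ Lᶜ, -∑ γ, q i γ * Real.log (p t₁ i γ)) =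
      ((∑ i ∈ L, -∑ γ, q i γ * Real.log (p t₂ i γ))
          - ∑ i ∈ Lᶜ, -∑ γ, q i γ * Real.log (p t₂ i γ))) ∧
    (∀ t₁ t₂ : ℝ,
      ((∑ i ∈ L, ∑ γ, q i γ * Real.log (q i γ / p t₁ i γ))
          - ∑ i ∈ Lᶜ, ∑ γ, q i γ * Real.log (q i γ / p t₁ i γ)) =
      ((∑ i ∈ L, ∑ γ, q i γ * Real.log (q i γ / p t₂ i γ))
          - ∑ i ∈ Lᶜ, ∑ γ, q i γ * Real.log (q i γ / p t₂ i γ))) := by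
  have hderiv : ∀ t, HasDerivAt (fun τ => (∑ i ∈ L, ∑ γ, q i γ * Real.log (p τ i γ))
      - ∑ i ∈ Lᶜ, ∑ γ, q i γ * Real.log (p τ i γ)) 0 t := fun t => by
    have hd := hasDerivAt_sum_mul_log_of_replicator q (fun i γ => (hppos t i γ).ne') (hode t)
    rw [← sub_eq_zero_of_eq (sum_drift_eq_of_bipartite hsymm hbip (fun i => (hqΔ i).2) hqNash
      (fun i => (hpΔ t i).2))]
    exact (hd L).sub (hd Lᶜ)
  have hconst := is_const_of_deriv_eq_zero (fun t => (hderiv t).differentiableAt)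
    (fun t => (hderiv t).deriv)
  have hlog_div : ∀ t i γ, Real.log (q i γ / p t i γ) = Real.log (q i γ) - Real.log (p t i γ) :=
    fun t i γ => Real.log_div (hqpos i γ).ne' (hppos t i γ).ne'
  refine ⟨hconst, fun t₁ t₂ => ?_, fun t₁ t₂ => ?_⟩
  · simp only [sum_neg_distrib]
    linarith [hconst t₁ t₂]
  · simp only [hlog_div, mul_sub, sum_sub_distrib]
    linarith [hconst t₁ t₂]
end
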